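/- arXiv:2207.04851 — 5 statements merged into one kernel-verified Lean document; each statement's English description precedes it below -/
import Mathlib

section
/- For every initial condition (ξ₀, θ₀, α₀) ∈ ℝ³ there is a unique solution γ = (ξ, θ, α) of the ODE system (*) with γ(0) = (ξ₀, θ₀, α₀); this solution is smooth and is defined on all of ℝ (i.e. solutions exist for all times). -/
/-- The constant `m = m₁ + m₂ + 2/g`. -/
noncomputable def mconst (g m₁ m₂ : ℕ) : ℝ := (m₁ : ℝ) + (m₂ : ℝ) + 2 / (g : ℝ)

/-- The angle `θ* = arctan √(m₁/m₂)`. -/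
noncomputable def thetaStar (m₁ m₂ : ℕ) : ℝ :=
  Real.arctan (Real.sqrt ((m₁ : ℝ) / (m₂ : ℝ)))

/-- `l(θ) = m₁ cos² θ - m₂ sin² θ`. -/
noncomputable def lfun (m₁ m₂ : ℕ) (θ : ℝ) : ℝ :=
  (m₁ : ℝ) * Real.cos θ ^ 2 - (m₂ : ℝ) * Real.sin θ ^ 2

/-- `(ξ, θ, α)` is a (globally defined) solution of the ODE system (*):
`ξ' = cos α · sin 2θ`, `θ' = sin α · sin 2θ`,
`α' = sin α · sin 2θ · (exp((4/g)ξ) - m) + 2 cos α · l(θ)`. -/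
def IsSolution (g m₁ m₂ : ℕ) (ξ θ α : ℝ → ℝ) : Prop :=
  ∀ t : ℝ,
    HasDerivAt ξ (Real.cos (α t) * Real.sin (2 * θ t)) t ∧
    HasDerivAt θ (Real.sin (α t) * Real.sin (2 * θ t)) t ∧
    HasDerivAt α
      (Real.sin (α t) * Real.sin (2 * θ t) *
          (Real.exp (4 / (g : ℝ) * ξ t) - mconst g m₁ m₂) +
        2 * Real.cos (α t) * lfun m₁ m₂ (θ t)) t

/-!
The right-hand side of (*) is smooth, hence locally Lipschitz, which gives uniqueness and
smoothness of solutions. It is unbounded only through `exp ((4/g) ξ)`, and `|ξ'| ≤ 1`, so on the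
time interval `[-T, T]` a solution starting at `ξ₀` stays in `{ξ ≤ ξ₀ + T}`. Clamping `ξ` at
`ξ₀ + T` gives a bounded, locally Lipschitz field, for which Picard–Lindelöf provides a solution
on the whole of `[-T, T]`; it never feels the clamp, so it solves (*), and by uniqueness these
solutions for `T = 1, 2, …` patch together into a global one.
-/

open Set
open scoped NNReal Topology

section Autonomous

variable {E : Type*} [NormedAddCommGroup E] [NormedSpace ℝ E] {v : E → E}

theorem hasDerivAt_prodMk_iff {𝕜 F G : Type*} [NontriviallyNormedField 𝕜]
    [NormedAddCommGroup F] [NormedSpace 𝕜 F] [NormedAddCommGroup G] [NormedSpace 𝕜 G]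
    {f₁ : 𝕜 → F} {f₂ : 𝕜 → G} {a : F} {b : G} {x : 𝕜} :
    HasDerivAt (fun t ↦ (f₁ t, f₂ t)) (a, b) x ↔ HasDerivAt f₁ a x ∧ HasDerivAt f₂ b x :=
  ⟨fun h ↦ ⟨(hasFDerivAt_fst.comp_hasDerivAt x h :), (hasFDerivAt_snd.comp_hasDerivAt x h :)⟩,
    fun h ↦ h.1.prodMk h.2⟩

theorem LocallyLipschitz.eqOn_Icc_of_isIntegralCurveOn (hv : LocallyLipschitz v)
    {γ₁ γ₂ : ℝ → E} {a b t₀ : ℝ} (h₁ : IsIntegralCurveOn γ₁ (fun _ ↦ v) (Icc a b))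
    (h₂ : IsIntegralCurveOn γ₂ (fun _ ↦ v) (Icc a b)) (ht₀ : t₀ ∈ Ioo a b)
    (h : γ₁ t₀ = γ₂ t₀) : EqOn γ₁ γ₂ (Icc a b) := by
  obtain ⟨K, hK⟩ := hv.locallyLipschitzOn.exists_lipschitzOnWith_of_compact
    ((isCompact_Icc.image_of_continuousOn h₁.continuousOn).union
      (isCompact_Icc.image_of_continuousOn h₂.continuousOn))
  have hderiv {γ : ℝ → E} (hγ : IsIntegralCurveOn γ (fun _ ↦ v) (Icc a b)) :
      ∀ t ∈ Ioo a b, HasDerivAt γ (v (γ t)) t := fun t ht ↦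
    (hγ t (Ioo_subset_Icc_self ht)).hasDerivAt (Icc_mem_nhds ht.1 ht.2)
  exact ODE_solution_unique_of_mem_Icc (fun _ _ ↦ hK) ht₀
    h₁.continuousOn (hderiv h₁) (fun t ht ↦ .inl (mem_image_of_mem _ (Ioo_subset_Icc_self ht)))
    h₂.continuousOn (hderiv h₂) (fun t ht ↦ .inr (mem_image_of_mem _ (Ioo_subset_Icc_self ht))) h

theorem LocallyLipschitz.eq_of_isIntegralCurve (hv : LocallyLipschitz v) {γ₁ γ₂ : ℝ → E}
    (h₁ : IsIntegralCurve γ₁ (fun _ ↦ v)) (h₂ : IsIntegralCurve γ₂ (fun _ ↦ v)) {t₀ : ℝ}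
    (h : γ₁ t₀ = γ₂ t₀) : γ₁ = γ₂ := by
  funext t
  exact hv.eqOn_Icc_of_isIntegralCurveOn (h₁.isIntegralCurveOn _) (h₂.isIntegralCurveOn _)
    (a := -(|t| + |t₀| + 1)) (b := |t| + |t₀| + 1)
    ⟨by linarith [neg_abs_le t₀, abs_nonneg t], by linarith [le_abs_self t₀, abs_nonneg t]⟩ h
    ⟨by linarith [neg_abs_le t, abs_nonneg t₀], by linarith [le_abs_self t, abs_nonneg t₀]⟩

theorem LocallyLipschitz.exists_isIntegralCurveOn_Icc [ProperSpace E] (hv : LocallyLipschitz v)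
    (hbdd : Bornology.IsBounded (range v)) (x₀ : E) {T : ℝ} (hT : 0 ≤ T) :
    ∃ γ : ℝ → E, γ 0 = x₀ ∧ IsIntegralCurveOn γ (fun _ ↦ v) (Icc (-T) T) := by
  obtain ⟨L, hL₀, hL⟩ := hbdd.exists_pos_norm_le
  lift L to ℝ≥0 using hL₀.le
  lift T to ℝ≥0 using hT
  obtain ⟨K, hK⟩ := hv.locallyLipschitzOn.exists_lipschitzOnWith_of_compact
    (isCompact_closedBall x₀ (L * T))
  have hPL : IsPicardLindelof (fun _ ↦ v) (tmin := -T) (tmax := T) ⟨0, by simp⟩ x₀ (L * T) 0 L K :=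
    .of_time_independent (fun x _ ↦ hL _ (mem_range_self x)) hK (by simp)
  exact hPL.exists_eq_forall_mem_Icc_hasDerivWithinAt₀

theorem LocallyLipschitz.exists_isIntegralCurve (hv : LocallyLipschitz v) {x₀ : E}
    (hloc : ∀ n : ℕ, ∃ γ : ℝ → E, γ 0 = x₀ ∧ IsIntegralCurveOn γ (fun _ ↦ v) (Icc (-n) n)) :
    ∃ γ : ℝ → E, γ 0 = x₀ ∧ IsIntegralCurve γ (fun _ ↦ v) := by
  choose F hF₀ hF using hloc
  have agree {n k : ℕ} (hnk : n ≤ k) {s : ℝ} (hs : |s| < n) : F n s = F k s := by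
    have hn : (0 : ℝ) < n := (abs_nonneg s).trans_lt hs
    have hnk' : (n : ℝ) ≤ k := Nat.cast_le.2 hnk
    exact hv.eqOn_Icc_of_isIntegralCurveOn (hF n)
      ((hF k).mono (Icc_subset_Icc (neg_le_neg hnk') hnk')) (t₀ := 0) ⟨by linarith, hn⟩
      (by rw [hF₀, hF₀]) ⟨by linarith [neg_abs_le s], by linarith [le_abs_self s]⟩
  have patch {n : ℕ} {s : ℝ} (hs : |s| < n) : F (⌊|s|⌋₊ + 1) s = F n s := by
    have hk : |s| < ↑(⌊|s|⌋₊ + 1) := by exact_mod_cast Nat.lt_floor_add_one |s|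
    rcases le_total (⌊|s|⌋₊ + 1) n with h | h
    · exact agree h hk
    · exact (agree h hs).symm
  refine ⟨fun t ↦ F (⌊|t|⌋₊ + 1) t, (patch (n := 1) (s := 0) (by simp)).trans (hF₀ 1), fun t ↦ ?_⟩
  set n := ⌊|t|⌋₊ + 1
  have ht : |t| < n := by exact_mod_cast Nat.lt_floor_add_one |t|
  have heq : (fun s ↦ F (⌊|s|⌋₊ + 1) s) =ᶠ[𝓝 t] F n :=
    Filter.eventuallyEq_of_mem ((isOpen_lt continuous_abs continuous_const).mem_nhds ht)
      fun s hs ↦ patch hs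
  rw [heq.hasDerivAt_iff]
  show HasDerivAt (F n) (v (F n t)) t
  rw [abs_lt] at ht
  exact (hF n t ⟨ht.1.le, ht.2.le⟩).hasDerivAt (Icc_mem_nhds ht.1 ht.2)

theorem IsIntegralCurve.contDiff [CompleteSpace E] {n : ℕ∞} (hv : ContDiff ℝ n v) {γ : ℝ → E}
    (hγ : IsIntegralCurve γ (fun _ ↦ v)) : ContDiff ℝ n γ :=
  contDiff_iff_contDiffAt.2 fun t ↦
    (ODE.contDiffOn_enat_Icc_of_hasDerivWithinAt (tmin := t - 1) (tmax := t + 1)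
      (hv.comp contDiff_snd).contDiffOn (hγ.isIntegralCurveOn _) (mapsTo_univ _ _)).contDiffAt
      (Icc_mem_nhds (by linarith) (by linarith))

end Autonomous

section ODESystem

variable (g m₁ m₂ : ℕ)

noncomputable def odeField (p : ℝ × ℝ × ℝ) : ℝ × ℝ × ℝ :=
  (Real.cos p.2.2 * Real.sin (2 * p.2.1),
   Real.sin p.2.2 * Real.sin (2 * p.2.1),
   Real.sin p.2.2 * Real.sin (2 * p.2.1) * (Real.exp (4 / (g : ℝ) * p.1) - mconst g m₁ m₂) +
     2 * Real.cos p.2.2 * lfun m₁ m₂ p.2.1)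

theorem isSolution_iff_isIntegralCurve {ξ θ α : ℝ → ℝ} :
    IsSolution g m₁ m₂ ξ θ α ↔
      IsIntegralCurve (fun t ↦ (ξ t, θ t, α t)) (fun _ ↦ odeField g m₁ m₂) := by
  simp only [IsSolution, IsIntegralCurve, odeField, hasDerivAt_prodMk_iff]

theorem contDiff_odeField {n : WithTop ℕ∞} : ContDiff ℝ n (odeField g m₁ m₂) := by
  unfold odeField lfun
  fun_prop

theorem locallyLipschitz_odeField : LocallyLipschitz (odeField g m₁ m₂) :=
  (contDiff_odeField g m₁ m₂).locallyLipschitz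

theorem abs_odeField_fst_le (p : ℝ × ℝ × ℝ) : |(odeField g m₁ m₂ p).1| ≤ 1 := by
  rw [odeField, abs_mul]
  exact mul_le_one₀ (Real.abs_cos_le_one _) (abs_nonneg _) (Real.abs_sin_le_one _)

theorem abs_lfun_le (θ : ℝ) : |lfun m₁ m₂ θ| ≤ m₁ + m₂ := by
  have := Real.sin_sq_le_one θ
  have := Real.cos_sq_le_one θ
  rw [lfun, abs_le]
  constructor <;> nlinarith [sq_nonneg (Real.sin θ), sq_nonneg (Real.cos θ),
    Nat.cast_nonneg (α := ℝ) m₁, Nat.cast_nonneg (α := ℝ) m₂]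

theorem norm_odeField_le {C : ℝ} {p : ℝ × ℝ × ℝ} (hp : p.1 ≤ C) :
    ‖odeField g m₁ m₂ p‖ ≤ 1 + Real.exp (4 / g * C) + mconst g m₁ m₂ + 2 * (m₁ + m₂) := by
  obtain ⟨ξ, θ, α⟩ := p
  have hm : 0 ≤ mconst g m₁ m₂ := by unfold mconst; positivity
  have hcos : |Real.cos α * Real.sin (2 * θ)| ≤ 1 := abs_odeField_fst_le g m₁ m₂ (ξ, θ, α)
  have hsin : |Real.sin α * Real.sin (2 * θ)| ≤ 1 := by
    rw [abs_mul]
    exact mul_le_one₀ (Real.abs_sin_le_one _) (abs_nonneg _) (Real.abs_sin_le_one _)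
  have hexp : Real.exp (4 / g * ξ) ≤ Real.exp (4 / g * C) := by gcongr
  have hexp_sub : |Real.exp (4 / g * ξ) - mconst g m₁ m₂| ≤ Real.exp (4 / g * C) + mconst g m₁ m₂ :=
    abs_le.2 ⟨by linarith [Real.exp_pos (4 / g * ξ)], by linarith⟩
  have hthird : |Real.sin α * Real.sin (2 * θ) * (Real.exp (4 / g * ξ) - mconst g m₁ m₂) +
      2 * Real.cos α * lfun m₁ m₂ θ| ≤ Real.exp (4 / g * C) + mconst g m₁ m₂ + 2 * (m₁ + m₂) :=
    calc _ ≤ |Real.sin α * Real.sin (2 * θ)| * |Real.exp (4 / g * ξ) - mconst g m₁ m₂| +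
          2 * |Real.cos α| * |lfun m₁ m₂ θ| := by
          refine (abs_add_le _ _).trans_eq ?_
          rw [abs_mul (_ * _), abs_mul (2 * _), abs_mul 2, abs_two]
      _ ≤ 1 * (Real.exp (4 / g * C) + mconst g m₁ m₂) + 2 * 1 * (m₁ + m₂) := by
          gcongr
          · exact Real.abs_cos_le_one α
          · exact abs_lfun_le m₁ m₂ θ
      _ = _ := by ring
  have hpos : 0 ≤ Real.exp (4 / g * C) + mconst g m₁ m₂ + 2 * (m₁ + m₂) := by positivity
  simp only [odeField, Prod.norm_mk, Real.norm_eq_abs]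
  exact max_le (by linarith) (max_le (by linarith) (by linarith))

noncomputable def clampedField (C : ℝ) (p : ℝ × ℝ × ℝ) : ℝ × ℝ × ℝ :=
  odeField g m₁ m₂ (min p.1 C, p.2)

theorem locallyLipschitz_clampedField (C : ℝ) : LocallyLipschitz (clampedField g m₁ m₂ C) :=
  (locallyLipschitz_odeField g m₁ m₂).comp
    ((LipschitzWith.prod_fst.min_const C).prodMk LipschitzWith.prod_snd).locallyLipschitz

theorem isBounded_range_clampedField (C : ℝ) :
    Bornology.IsBounded (range (clampedField g m₁ m₂ C)) :=
  isBounded_iff_forall_norm_le.2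
    ⟨_, forall_mem_range.2 fun p ↦ norm_odeField_le g m₁ m₂ (min_le_right p.1 C)⟩

theorem exists_isIntegralCurveOn_odeField (x₀ : ℝ × ℝ × ℝ) {T : ℝ} (hT : 0 ≤ T) :
    ∃ γ : ℝ → ℝ × ℝ × ℝ, γ 0 = x₀ ∧
      IsIntegralCurveOn γ (fun _ ↦ odeField g m₁ m₂) (Icc (-T) T) := by
  obtain ⟨γ, hγ₀, hγ⟩ :=
    (locallyLipschitz_clampedField g m₁ m₂ (x₀.1 + T)).exists_isIntegralCurveOn_Icc
      (isBounded_range_clampedField g m₁ m₂ _) x₀ hT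
  have hξ (t : ℝ) (ht : t ∈ Icc (-T) T) : (γ t).1 ≤ x₀.1 + T := by
    have h := (convex_Icc (-T) T).norm_image_sub_le_of_norm_hasDerivWithin_le
      (f := fun s ↦ (γ s).1) (fun s hs ↦ hasFDerivAt_fst.comp_hasDerivWithinAt s (hγ s hs))
      (fun s _ ↦ abs_odeField_fst_le g m₁ m₂ _) ⟨by linarith, hT⟩ ht
    simp only [hγ₀, Real.norm_eq_abs, one_mul, sub_zero] at h
    linarith [le_abs_self ((γ t).1 - x₀.1), abs_le.2 ht]
  refine ⟨γ, hγ₀, fun t ht ↦ ?_⟩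
  convert hγ t ht using 2
  simp [clampedField, min_eq_left (hξ t ht)]

theorem exists_isIntegralCurve_odeField (x₀ : ℝ × ℝ × ℝ) :
    ∃ γ : ℝ → ℝ × ℝ × ℝ, γ 0 = x₀ ∧ IsIntegralCurve γ (fun _ ↦ odeField g m₁ m₂) :=
  (locallyLipschitz_odeField g m₁ m₂).exists_isIntegralCurve fun n ↦
    exists_isIntegralCurveOn_odeField g m₁ m₂ x₀ n.cast_nonneg

end ODESystem

theorem stmt0_general (g m₁ m₂ : ℕ) (ξ₀ θ₀ α₀ : ℝ) :
    ∃ ξ θ α : ℝ → ℝ,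
      (IsSolution g m₁ m₂ ξ θ α ∧ ξ 0 = ξ₀ ∧ θ 0 = θ₀ ∧ α 0 = α₀) ∧
      ContDiff ℝ (⊤ : ℕ∞) ξ ∧ ContDiff ℝ (⊤ : ℕ∞) θ ∧ ContDiff ℝ (⊤ : ℕ∞) α ∧
      ∀ ξ' θ' α' : ℝ → ℝ,
        IsSolution g m₁ m₂ ξ' θ' α' → ξ' 0 = ξ₀ → θ' 0 = θ₀ → α' 0 = α₀ →
          ξ' = ξ ∧ θ' = θ ∧ α' = α := by
  obtain ⟨γ, hγ₀, hγ⟩ := exists_isIntegralCurve_odeField g m₁ m₂ (ξ₀, θ₀, α₀)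
  have hγ_smooth : ContDiff ℝ (⊤ : ℕ∞) γ := hγ.contDiff (contDiff_odeField g m₁ m₂)
  refine ⟨fun t ↦ (γ t).1, fun t ↦ (γ t).2.1, fun t ↦ (γ t).2.2,
    ⟨(isSolution_iff_isIntegralCurve g m₁ m₂).2 hγ, by simp [hγ₀], by simp [hγ₀], by simp [hγ₀]⟩,
    contDiff_fst.comp hγ_smooth, contDiff_fst.comp (contDiff_snd.comp hγ_smooth),
    contDiff_snd.comp (contDiff_snd.comp hγ_smooth), fun ξ θ α h hξ hθ hα ↦ ?_⟩
  obtain rfl := (locallyLipschitz_odeField g m₁ m₂).eq_of_isIntegralCurve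
    ((isSolution_iff_isIntegralCurve g m₁ m₂).1 h) hγ (t₀ := 0) (by simp [hξ, hθ, hα, hγ₀])
  exact ⟨rfl, rfl, rfl⟩

/-- For every initial condition there exists a unique, smooth, globally
defined solution of (*). -/
theorem stmt0 (g m₁ m₂ : ℕ) (hg : g = 1 ∨ g = 2 ∨ g = 3 ∨ g = 4 ∨ g = 6)
    (hm₁ : 0 < m₁) (hm₂ : 0 < m₂)
    (ξ₀ θ₀ α₀ : ℝ) :
    ∃ ξ θ α : ℝ → ℝ,
      (IsSolution g m₁ m₂ ξ θ α ∧ ξ 0 = ξ₀ ∧ θ 0 = θ₀ ∧ α 0 = α₀) ∧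
      ContDiff ℝ (⊤ : ℕ∞) ξ ∧ ContDiff ℝ (⊤ : ℕ∞) θ ∧ ContDiff ℝ (⊤ : ℕ∞) α ∧
      ∀ ξ' θ' α' : ℝ → ℝ,
        IsSolution g m₁ m₂ ξ' θ' α' → ξ' 0 = ξ₀ → θ' 0 = θ₀ → α' 0 = α₀ →
          ξ' = ξ ∧ θ' = θ ∧ α' = α :=
  stmt0_general g m₁ m₂ ξ₀ θ₀ α₀
end

section
/- Every solution of (*) with initial condition in 𝒟 = ℝ × (0, π/2) × ℝ remains in 𝒟 for all times; that is, if θ(0) ∈ (0, π/2) then θ(t) ∈ (0, π/2) for all t ∈ ℝ. -/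
open Real Set

lemma lipschitzWith_sin_mul_sin_two_mul (a : ℝ) :
    LipschitzWith 2 fun y : ℝ ↦ sin a * sin (2 * y) := by
  have h := (lipschitzWith_smul (sin a)).comp (lipschitzWith_sin.comp (lipschitzWith_smul (2 : ℝ)))
  refine h.weaken ?_
  rw [← NNReal.coe_le_coe]
  simp only [NNReal.coe_mul, coe_nnnorm, one_mul, norm_two, NNReal.coe_ofNat]
  exact mul_le_of_le_one_left zero_le_two (by simpa using abs_sin_le_one a)

theorem eq_const_of_hasDerivAt_of_eq {E : Type*} [NormedAddCommGroup E] [NormedSpace ℝ E]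
    {v : ℝ → E → E} {K : NNReal} {f : ℝ → E} {c : E} {t₀ : ℝ}
    (hv : ∀ t, LipschitzWith K (v t)) (hc : ∀ t, v t c = 0)
    (hf : ∀ t, HasDerivAt f (v t (f t)) t) (h : f t₀ = c) :
    f = fun _ ↦ c :=
  ODE_solution_unique_univ (s := fun _ ↦ univ) (fun t ↦ (hv t).lipschitzOnWith)
    (fun t ↦ ⟨hf t, trivial⟩) (fun t ↦ ⟨by simpa [hc t] using hasDerivAt_const t c, trivial⟩) h

theorem mem_Ioo_of_hasDerivAt_of_eq_zero {v : ℝ → ℝ → ℝ} {K : NNReal} {f : ℝ → ℝ}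
    {a b t₀ : ℝ} (hv : ∀ t, LipschitzWith K (v t)) (ha : ∀ t, v t a = 0)
    (hb : ∀ t, v t b = 0) (hf : ∀ t, HasDerivAt f (v t (f t)) t) (h₀ : f t₀ ∈ Ioo a b)
    (t : ℝ) : f t ∈ Ioo a b := by
  have hcont : Continuous f := continuous_iff_continuousAt.2 fun t ↦ (hf t).continuousAt
  have avoids : ∀ c, (∀ t, v t c = 0) → f t₀ ≠ c → c ∉ range f := by
    rintro c hc hne ⟨s, hs⟩
    exact hne (congrFun (eq_const_of_hasDerivAt_of_eq hv hc hf hs) t₀)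
  refine ⟨lt_of_not_ge fun hle ↦ ?_, lt_of_not_ge fun hle ↦ ?_⟩
  · exact avoids a ha h₀.1.ne' (intermediate_value_univ t t₀ hcont ⟨hle, h₀.1.le⟩)
  · exact avoids b hb h₀.2.ne (intermediate_value_univ t₀ t hcont ⟨h₀.2.le, hle⟩)

theorem stmt2_general (g m₁ m₂ : ℕ)
    (ξ θ α : ℝ → ℝ) (hsol : IsSolution g m₁ m₂ ξ θ α)
    (h0 : θ 0 ∈ Set.Ioo 0 (Real.pi / 2)) :
    ∀ t : ℝ, θ t ∈ Set.Ioo 0 (Real.pi / 2) :=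
  mem_Ioo_of_hasDerivAt_of_eq_zero (v := fun t y ↦ sin (α t) * sin (2 * y))
    (fun t ↦ lipschitzWith_sin_mul_sin_two_mul (α t)) (fun t ↦ by simp)
    (fun t ↦ by simp [mul_div_cancel₀]) (fun t ↦ (hsol t).2.1) h0

/-- Solutions of (*) starting in `𝒟 = ℝ × (0, π/2) × ℝ` remain in `𝒟`
for all times. -/
theorem stmt2 (g m₁ m₂ : ℕ) (hg : g = 1 ∨ g = 2 ∨ g = 3 ∨ g = 4 ∨ g = 6)
    (hm₁ : 0 < m₁) (hm₂ : 0 < m₂)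
    (ξ θ α : ℝ → ℝ) (hsol : IsSolution g m₁ m₂ ξ θ α)
    (h0 : θ 0 ∈ Set.Ioo 0 (Real.pi / 2)) :
    ∀ t : ℝ, θ t ∈ Set.Ioo 0 (Real.pi / 2) :=
  stmt2_general g m₁ m₂ ξ θ α hsol h0
end

section
/- If a solution (ξ, θ, α) of (*) with values in 𝒟 satisfies, for some t₀ ∈ ℝ, either ξ(t₀) > (g/4)·ln(m) and ξ'(t₀) < 0, or ξ(t₀) < (g/4)·ln(m) and ξ'(t₀) > 0, then there exists a finite time T ∈ (0, ∞) such that ξ(t₀ + T) = (g/4)·ln(m). -/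
/-!
Along a solution, `V := cos α · sin^m₁ θ · cos^m₂ θ` satisfies
`V' = -sin² α · sin 2θ · (exp((4/g) ξ) - m) · sin^m₁ θ · cos^m₂ θ`,
so `V` is monotone as long as `ξ` stays on one side of `c := (g/4) ln m`. If `ξ` never reached `c`,
then `|V|` would stay at least `v := |V(t₀)| > 0`. Since `sin^m₁ θ · cos^m₂ θ ≤ min(sin θ, cos θ)`,
this keeps `|cos α|`, `sin θ` and `cos θ` all above `v`, so `ξ` would move towards `c` with speed
at least `2v³` and reach it after all.
-/

open Real Set

lemma pos_on_Ici_of_ne_zero {f : ℝ → ℝ} (hf : Continuous f) {t₀ : ℝ} (h₀ : 0 < f t₀)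
    (hne : ∀ T > 0, f (t₀ + T) ≠ 0) : ∀ t ∈ Ici t₀, 0 < f t := by
  intro t ht
  by_contra! hle
  obtain ⟨s, ⟨hs₀, -⟩, hs⟩ := intermediate_value_Icc' ht hf.continuousOn ⟨hle, h₀.le⟩
  have hs₀' : t₀ < s := lt_of_le_of_ne hs₀ (by rintro rfl; exact h₀.ne' hs)
  exact hne (s - t₀) (sub_pos.2 hs₀') (by rwa [add_sub_cancel])

lemma exists_nonpos_of_hasDerivAt_le_neg {f f' : ℝ → ℝ} {t₀ δ : ℝ}
    (hf : ∀ t, HasDerivAt f (f' t) t) (hδ : 0 < δ) (hf' : ∀ t ∈ Ici t₀, f' t ≤ -δ) :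
    ∃ t ∈ Ici t₀, f t ≤ 0 := by
  have hdecay := (convex_Ici t₀).image_sub_le_mul_sub_of_deriv_le
    (fun t _ ↦ (hf t).continuousAt.continuousWithinAt)
    (fun t _ ↦ (hf t).differentiableAt.differentiableWithinAt)
    (fun t ht ↦ (hf t).deriv ▸ hf' t (interior_subset ht))
  have hT : t₀ ≤ t₀ + |f t₀| / δ := le_add_of_nonneg_right (by positivity)
  refine ⟨_, hT, ?_⟩
  have := hdecay t₀ self_mem_Ici _ hT hT
  rw [add_sub_cancel_left, neg_mul, mul_div_cancel₀ _ hδ.ne'] at this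
  linarith [le_abs_self (f t₀)]

lemma mul_sub_pos_of_strictMono {φ : ℝ → ℝ} (hφ : StrictMono φ) {ε x c : ℝ}
    (h : 0 < ε * (x - c)) : 0 < ε * (φ x - φ c) := by
  rcases mul_pos_iff.1 h with ⟨hε, hx⟩ | ⟨hε, hx⟩
  · exact mul_pos hε (sub_pos.2 (hφ (sub_pos.1 hx)))
  · exact mul_pos_of_neg_of_neg hε (sub_neg.2 (hφ (sub_neg.1 hx)))

lemma pow_three_le_mul_mul {v a w s c : ℝ} (hv : 0 < v) (hva : v ≤ a * w) (ha : a ≤ 1)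
    (hw₀ : 0 ≤ w) (hw₁ : w ≤ 1) (hws : w ≤ s) (hwc : w ≤ c) : v ^ 3 ≤ a * (s * c) := by
  have ha₀ : 0 < a := pos_of_mul_pos_left (hv.trans_le hva) hw₀
  have hvw : v ≤ w := hva.trans (mul_le_of_le_one_left hw₀ ha)
  have hva' : v ≤ a := hva.trans (mul_le_of_le_one_right ha₀.le hw₁)
  calc v ^ 3 = v * (v * v) := by ring
    _ ≤ a * (s * c) := by gcongr <;> linarith

lemma natCast_mul_pow_sub_one_mul (n : ℕ) (x : ℝ) : (n : ℝ) * x ^ (n - 1) * x = n * x ^ n := by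
  cases n <;> simp [pow_succ, mul_assoc]

lemma sin_pos_and_cos_pos_of_mem_Ioo {θ : ℝ} (hθ : θ ∈ Ioo 0 (π / 2)) :
    0 < sin θ ∧ 0 < cos θ :=
  ⟨sin_pos_of_pos_of_lt_pi hθ.1 (by linarith [hθ.2, pi_pos]),
    cos_pos_of_mem_Ioo ⟨by linarith [hθ.1, pi_pos], hθ.2⟩⟩

lemma sin_two_mul_pos_of_mem_Ioo {θ : ℝ} (hθ : θ ∈ Ioo 0 (π / 2)) : 0 < sin (2 * θ) := by
  obtain ⟨hs, hc⟩ := sin_pos_and_cos_pos_of_mem_Ioo hθ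
  rw [sin_two_mul]
  positivity

noncomputable def weight (m₁ m₂ : ℕ) (θ : ℝ) : ℝ := sin θ ^ m₁ * cos θ ^ m₂

section Weight

variable {m₁ m₂ : ℕ} {θ : ℝ}

lemma weight_pos (hs : 0 < sin θ) (hc : 0 < cos θ) : 0 < weight m₁ m₂ θ := by
  unfold weight
  positivity

lemma weight_le_one (hs : 0 ≤ sin θ) (hc : 0 ≤ cos θ) : weight m₁ m₂ θ ≤ 1 :=
  mul_le_one₀ (pow_le_one₀ hs (sin_le_one θ)) (pow_nonneg hc m₂) (pow_le_one₀ hc (cos_le_one θ))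

lemma weight_le_sin (hm₁ : 0 < m₁) (hs : 0 ≤ sin θ) (hc : 0 ≤ cos θ) :
    weight m₁ m₂ θ ≤ sin θ :=
  (mul_le_of_le_one_right (pow_nonneg hs m₁) (pow_le_one₀ hc (cos_le_one θ))).trans
    (pow_le_of_le_one hs (sin_le_one θ) hm₁.ne')

lemma weight_le_cos (hm₂ : 0 < m₂) (hs : 0 ≤ sin θ) (hc : 0 ≤ cos θ) :
    weight m₁ m₂ θ ≤ cos θ :=
  (mul_le_of_le_one_left (pow_nonneg hc m₂) (pow_le_one₀ hs (sin_le_one θ))).trans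
    (pow_le_of_le_one hc (cos_le_one θ) hm₂.ne')

end Weight

lemma mul_cos_mul_sin_two_mul_le {m₁ m₂ : ℕ} (hm₁ : 0 < m₁) (hm₂ : 0 < m₂) {ε v a θ : ℝ}
    (hε : |ε| ≤ 1) (hθ : θ ∈ Ioo 0 (π / 2)) (hv : 0 < v)
    (hva : v ≤ -ε * (cos a * weight m₁ m₂ θ)) :
    ε * (cos a * sin (2 * θ)) ≤ -(2 * v ^ 3) := by
  obtain ⟨hs, hc⟩ := sin_pos_and_cos_pos_of_mem_Ioo hθ
  have hε_cos : -ε * cos a ≤ 1 := by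
    calc -ε * cos a ≤ |ε| * |cos a| := by rw [← abs_neg ε, ← abs_mul]; exact le_abs_self _
      _ ≤ 1 := mul_le_one₀ hε (abs_nonneg _) (abs_cos_le_one a)
  have := pow_three_le_mul_mul hv (by rwa [← mul_assoc] at hva) hε_cos (weight_pos hs hc).le
    (weight_le_one hs.le hc.le) (weight_le_sin hm₁ hs.le hc.le) (weight_le_cos hm₂ hs.le hc.le)
  rw [sin_two_mul]
  linarith

lemma exp_four_div_mul_log_mconst {g : ℕ} (hg : 0 < g) (m₁ m₂ : ℕ) :
    exp (4 / g * (g / 4 * log (mconst g m₁ m₂))) = mconst g m₁ m₂ := by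
  have hmconst : 0 < mconst g m₁ m₂ := by unfold mconst; positivity
  rw [← mul_assoc, div_mul_div_cancel₀ (by positivity), div_self (by positivity), one_mul,
    exp_log hmconst]

section Solution

variable {g m₁ m₂ : ℕ} {ξ θ α : ℝ → ℝ}

lemma IsSolution.hasDerivAt_cos_mul_weight (hsol : IsSolution g m₁ m₂ ξ θ α) (t : ℝ) :
    HasDerivAt (fun s ↦ cos (α s) * weight m₁ m₂ (θ s))
      (-(sin (α t) ^ 2 * sin (2 * θ t) * (exp (4 / g * ξ t) - mconst g m₁ m₂) *
        weight m₁ m₂ (θ t))) t := by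
  obtain ⟨-, hθ, hα⟩ := hsol t
  refine (hα.cos.mul ((hθ.sin.pow m₁).mul (hθ.cos.pow m₂))).congr_deriv ?_
  have hs := natCast_mul_pow_sub_one_mul m₁ (sin (θ t))
  have hc := natCast_mul_pow_sub_one_mul m₂ (cos (θ t))
  simp only [weight, lfun, sin_two_mul, Pi.mul_apply, Pi.pow_apply] at hα ⊢
  -- the `l(θ)`-terms coming from `α'` and from `θ'` cancel
  linear_combination (2 * sin (α t) * cos (α t) * cos (θ t) ^ 2 * cos (θ t) ^ m₂) * hs -
    (2 * sin (α t) * cos (α t) * sin (θ t) ^ 2 * sin (θ t) ^ m₁) * hc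

lemma IsSolution.monotoneOn_neg_mul_cos_mul_weight (hsol : IsSolution g m₁ m₂ ξ θ α)
    (hD : ∀ t, θ t ∈ Ioo 0 (π / 2)) {ε : ℝ} {s : Set ℝ} (hs : Convex ℝ s)
    (hside : ∀ t ∈ s, 0 ≤ ε * (exp (4 / g * ξ t) - mconst g m₁ m₂)) :
    MonotoneOn (fun t ↦ -ε * (cos (α t) * weight m₁ m₂ (θ t))) s := by
  have hderiv t := (hsol.hasDerivAt_cos_mul_weight t).const_mul (-ε)
  refine monotoneOn_of_deriv_nonneg hs (fun t _ ↦ (hderiv t).continuousAt.continuousWithinAt)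
    (fun t _ ↦ (hderiv t).differentiableAt.differentiableWithinAt) fun t ht ↦ ?_
  obtain ⟨hsin, hcos⟩ := sin_pos_and_cos_pos_of_mem_Ioo (hD t)
  have hw : 0 < weight m₁ m₂ (θ t) := weight_pos hsin hcos
  rw [(hderiv t).deriv]
  linarith [mul_nonneg (mul_nonneg (mul_nonneg (sq_nonneg (sin (α t)))
    (sin_two_mul_pos_of_mem_Ioo (hD t)).le) (hside t (interior_subset ht))) hw.le]

theorem IsSolution.exists_pos_eq_of_mul_pos (hsol : IsSolution g m₁ m₂ ξ θ α) (hg : 0 < g)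
    (hm₁ : 0 < m₁) (hm₂ : 0 < m₂) (hD : ∀ t, θ t ∈ Ioo 0 (π / 2)) {ε t₀ : ℝ} (hε : |ε| ≤ 1)
    (hξ : 0 < ε * (ξ t₀ - g / 4 * log (mconst g m₁ m₂))) (hα : ε * cos (α t₀) < 0) :
    ∃ T > 0, ξ (t₀ + T) = g / 4 * log (mconst g m₁ m₂) := by
  set c := (g : ℝ) / 4 * log (mconst g m₁ m₂)
  by_contra! hne
  have hξ_cont : Continuous ξ := continuous_iff_continuousAt.2 fun t ↦ (hsol t).1.continuousAt
  have hside : ∀ t ∈ Ici t₀, 0 < ε * (ξ t - c) :=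
    pos_on_Ici_of_ne_zero (by fun_prop) hξ fun T hT ↦
      mul_ne_zero (left_ne_zero_of_mul hξ.ne') (sub_ne_zero.2 (hne T hT))
  have hexp_side : ∀ t ∈ Ici t₀, 0 ≤ ε * (exp (4 / g * ξ t) - mconst g m₁ m₂) := fun t ht ↦ by
    have hφ : StrictMono fun x : ℝ ↦ exp (4 / g * x) :=
      exp_strictMono.comp (strictMono_mul_left_of_pos (by positivity))
    simpa only [c, exp_four_div_mul_log_mconst hg] using
      (mul_sub_pos_of_strictMono hφ (hside t ht)).le
  have hmono := hsol.monotoneOn_neg_mul_cos_mul_weight hD (convex_Ici t₀) hexp_side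
  set v := -ε * (cos (α t₀) * weight m₁ m₂ (θ t₀))
  have hv : 0 < v := by
    obtain ⟨hs, hc⟩ := sin_pos_and_cos_pos_of_mem_Ioo (hD t₀)
    rw [show v = -(ε * cos (α t₀)) * weight m₁ m₂ (θ t₀) by ring]
    exact mul_pos (neg_pos.2 hα) (weight_pos hs hc)
  obtain ⟨t, ht, hle⟩ := exists_nonpos_of_hasDerivAt_le_neg
    (fun t ↦ ((hsol t).1.sub_const c).const_mul ε) (by positivity : 0 < 2 * v ^ 3)
    fun t ht ↦ mul_cos_mul_sin_two_mul_le hm₁ hm₂ hε (hD t) hv (hmono self_mem_Ici ht ht)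
  exact (hside t ht).not_ge hle

end Solution

/-- If `ξ'` points towards the line `ξ = (g/4) ln m`, then the solution
reaches this line in finite time. -/
theorem stmt7 (g m₁ m₂ : ℕ) (hg : g = 1 ∨ g = 2 ∨ g = 3 ∨ g = 4 ∨ g = 6)
    (hm₁ : 0 < m₁) (hm₂ : 0 < m₂)
    (ξ θ α : ℝ → ℝ) (hsol : IsSolution g m₁ m₂ ξ θ α)
    (hD : ∀ t : ℝ, θ t ∈ Set.Ioo 0 (Real.pi / 2)) (t₀ : ℝ)
    (h : (ξ t₀ > (g : ℝ) / 4 * Real.log (mconst g m₁ m₂) ∧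
            Real.cos (α t₀) * Real.sin (2 * θ t₀) < 0) ∨
         (ξ t₀ < (g : ℝ) / 4 * Real.log (mconst g m₁ m₂) ∧
            Real.cos (α t₀) * Real.sin (2 * θ t₀) > 0)) :
    ∃ T > (0 : ℝ), ξ (t₀ + T) = (g : ℝ) / 4 * Real.log (mconst g m₁ m₂) := by
  have hg₀ : 0 < g := by rcases hg with rfl | rfl | rfl | rfl | rfl <;> norm_num
  have hsin := sin_two_mul_pos_of_mem_Ioo (hD t₀)
  rcases h with ⟨hξ, hξ'⟩ | ⟨hξ, hξ'⟩
  · refine hsol.exists_pos_eq_of_mul_pos hg₀ hm₁ hm₂ hD (ε := 1) (by norm_num) ?_ ?_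
    · linarith
    · linarith [neg_of_mul_neg_left hξ' hsin.le]
  · refine hsol.exists_pos_eq_of_mul_pos hg₀ hm₁ hm₂ hD (ε := -1) (by norm_num) ?_ ?_
    · linarith
    · linarith [pos_of_mul_pos_left hξ' hsin.le]
end

section
/- If a solution (ξ, θ, α) of (*) with values in 𝒟 satisfies, for some t₀ ∈ ℝ, either θ(t₀) < θ* and θ'(t₀) > 0, or θ(t₀) > θ* and θ'(t₀) < 0, then there exists a finite time T ∈ (0, ∞) such that θ(t₀ + T) = θ*. -/
/-!
By the symmetry `(θ, α, m₁, m₂) ↦ (π/2 - θ, -α, m₂, m₁)` it suffices to treat `θ(t₀) < θ*`.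
Suppose `θ` never reaches `θ*` after `t₀`. Then `l(θ) > 0` along the forward orbit, so `sin α`
never vanishes (at a zero, `(sin α)' = 2 l(θ) > 0`); hence `θ` increases and stays in
`[θ(t₀), θ*)`, which keeps `sin 2θ ≥ c > 0`. The estimate `sin α · α' ≥ -K θ'` makes
`K θ - cos α` nondecreasing and bounded, so `cos α` converges, and `sin α → 0` since otherwise
`θ' = sin α sin 2θ` would stay bounded below by a positive constant. Thus `cos α → ±1` and
`ξ → ±∞` accordingly, so `(sin α)' = sin α sin 2θ · cos α (e^{4ξ/g} - m) + 2 cos² α · l(θ)` is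
eventually nonnegative: a positive, eventually nondecreasing function cannot tend to `0`.
-/

open Real Set Filter Topology

lemma monotoneOn_Ici_of_hasDerivAt_nonneg {f f' : ℝ → ℝ} {a : ℝ}
    (hf : ∀ x, HasDerivAt f (f' x) x) (hf' : ∀ x, a ≤ x → 0 ≤ f' x) :
    MonotoneOn f (Ici a) :=
  monotoneOn_of_hasDerivWithinAt_nonneg (convex_Ici a)
    (fun x _ => (hf x).continuousAt.continuousWithinAt)
    (fun x _ => (hf x).hasDerivWithinAt) (fun x hx => hf' x (interior_subset hx))

lemma tendsto_atTop_of_eventually_le_deriv {f f' : ℝ → ℝ} {r : ℝ}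
    (hf : ∀ x, HasDerivAt f (f' x) x) (hr : 0 < r) (h : ∀ᶠ x in atTop, r ≤ f' x) :
    Tendsto f atTop atTop := by
  obtain ⟨a, ha⟩ := eventually_atTop.1 h
  have hmono : MonotoneOn (fun x => f x - r * x) (Ici a) :=
    monotoneOn_Ici_of_hasDerivAt_nonneg (fun x => (hf x).sub ((hasDerivAt_id x).const_mul r))
      (fun x hx => by simpa using ha x hx)
  have hlin : Tendsto (fun x => f a - r * a + r * x) atTop atTop :=
    tendsto_atTop_add_const_left _ _ (tendsto_id.const_mul_atTop hr)
  refine tendsto_atTop_mono' atTop ?_ hlin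
  filter_upwards [eventually_ge_atTop a] with x hx
  have := hmono self_mem_Ici hx hx
  simp only at this
  linarith

lemma eventually_le_of_tendsto_of_eventually_deriv_nonneg {f f' : ℝ → ℝ} {L : ℝ}
    (hf : ∀ x, HasDerivAt f (f' x) x) (h : ∀ᶠ x in atTop, 0 ≤ f' x)
    (hL : Tendsto f atTop (𝓝 L)) : ∀ᶠ x in atTop, f x ≤ L := by
  obtain ⟨a, ha⟩ := eventually_atTop.1 h
  have hmono := monotoneOn_Ici_of_hasDerivAt_nonneg hf ha
  filter_upwards [eventually_ge_atTop a] with x hx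
  exact ge_of_tendsto hL <| by
    filter_upwards [eventually_ge_atTop x] with y hy
    exact hmono hx (hx.trans hy) hy

lemma exists_tendsto_of_monotoneOn_Ici {f : ℝ → ℝ} {a M : ℝ} (hf : MonotoneOn f (Ici a))
    (hM : ∀ x, a ≤ x → f x ≤ M) : ∃ L, Tendsto f atTop (𝓝 L) := by
  have hmono : Monotone (fun x => f (max x a)) := fun x y hxy =>
    hf (le_max_right x a) (le_max_right y a) (max_le_max hxy le_rfl)
  refine ⟨_, (tendsto_atTop_ciSup hmono ⟨M, ?_⟩).congr' ?_⟩
  · rintro _ ⟨x, rfl⟩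
    exact hM _ (le_max_right x a)
  · filter_upwards [eventually_ge_atTop a] with x hx
    rw [max_eq_left hx]

lemma pos_of_deriv_pos_of_eq_zero {f : ℝ → ℝ} {a b : ℝ} (hf : Continuous f) (ha : 0 < f a)
    (hab : a ≤ b) (h : ∀ x ∈ Ioc a b, f x = 0 → 0 < deriv f x) : 0 < f b := by
  by_contra! hb
  -- `sInf S` is the first zero of `f` after `a`; `f' > 0` there forces `f < 0` just before it
  set S := {x ∈ Icc a b | f x = 0}
  have hS : IsClosed S := isClosed_Icc.inter (isClosed_eq hf continuous_const)
  obtain ⟨z, hz, hfz⟩ := intermediate_value_Icc' hab hf.continuousOn ⟨hb, ha.le⟩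
  have hbdd : BddBelow S := ⟨a, fun x hx => hx.1.1⟩
  have ht₁ : sInf S ∈ S := hS.csInf_mem ⟨z, hz, hfz⟩ hbdd
  have ha₁ : a < sInf S := lt_of_le_of_ne ht₁.1.1 fun h => by rw [← h] at ht₁; linarith [ht₁.2]
  have hbefore : ∀ y ∈ Ico a (sInf S), 0 < f y := by
    intro y hy
    by_contra! hy'
    obtain ⟨w, hw, hfw⟩ := intermediate_value_Icc' hy.1 hf.continuousOn ⟨hy', ha.le⟩
    have : sInf S ≤ w := csInf_le hbdd ⟨⟨hw.1, hw.2.trans (hy.2.le.trans ht₁.1.2)⟩, hfw⟩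
    linarith [hw.2, hy.2]
  have hsign := eventually_nhdsWithin_sign_eq_of_deriv_pos
    (h _ ⟨ha₁, ht₁.1.2⟩ ht₁.2) ht₁.2
  obtain ⟨y, hy, hya⟩ := ((hsign.filter_mono nhdsWithin_le_nhds).and
    (Ioo_mem_nhdsLT ha₁)).exists
  rw [sign_neg (sub_neg.2 hya.2), sign_eq_neg_one_iff] at hy
  linarith [hbefore y ⟨hya.1.le, hya.2⟩]

lemma sin_two_mul_pos {x : ℝ} (hx : x ∈ Ioo 0 (π / 2)) : 0 < sin (2 * x) :=
  sin_pos_of_pos_of_lt_pi (by linarith [hx.1]) (by linarith [hx.2])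

lemma thetaStar_lt_pi_div_two (m₁ m₂ : ℕ) : thetaStar m₁ m₂ < π / 2 := arctan_lt_pi_div_two _

lemma sin_thetaStar_sq {m₁ m₂ : ℕ} (hm₂ : 0 < m₂) :
    sin (thetaStar m₁ m₂) ^ 2 = m₁ / (m₁ + m₂) := by
  have hm₂' : (0 : ℝ) < m₂ := by exact_mod_cast hm₂
  rw [thetaStar, sin_arctan, div_pow, sq_sqrt (by positivity), sq_sqrt (by positivity)]
  field_simp
  ring

lemma lfun_eq_mul_sin_sq_sub {m₁ m₂ : ℕ} (hm₂ : 0 < m₂) (x : ℝ) :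
    lfun m₁ m₂ x = (m₁ + m₂) * (sin (thetaStar m₁ m₂) ^ 2 - sin x ^ 2) := by
  have hm₂' : (0 : ℝ) < m₂ := by exact_mod_cast hm₂
  rw [sin_thetaStar_sq hm₂, lfun, cos_sq']
  field_simp
  ring

lemma lfun_pos {m₁ m₂ : ℕ} (hm₂ : 0 < m₂) {x : ℝ} (hx₀ : 0 ≤ x) (hx : x < thetaStar m₁ m₂) :
    0 < lfun m₁ m₂ x := by
  have hm₂' : (0 : ℝ) < m₂ := by exact_mod_cast hm₂
  have hsin : sin x < sin (thetaStar m₁ m₂) :=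
    sin_lt_sin_of_lt_of_le_pi_div_two (by linarith [pi_pos]) (thetaStar_lt_pi_div_two m₁ m₂).le hx
  have hsin₀ : 0 ≤ sin x :=
    sin_nonneg_of_nonneg_of_le_pi hx₀ (by linarith [thetaStar_lt_pi_div_two m₁ m₂, pi_pos])
  rw [lfun_eq_mul_sin_sq_sub hm₂]
  have : sin x ^ 2 < sin (thetaStar m₁ m₂) ^ 2 := by gcongr
  have : (0 : ℝ) < m₁ + m₂ := by positivity
  nlinarith

lemma lfun_le (m₁ m₂ : ℕ) (x : ℝ) : lfun m₁ m₂ x ≤ m₁ := by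
  have := cos_sq_le_one x
  unfold lfun
  nlinarith [sq_nonneg (sin x), Nat.cast_nonneg (α := ℝ) m₂, Nat.cast_nonneg (α := ℝ) m₁]

lemma thetaStar_swap {m₁ m₂ : ℕ} (hm₁ : 0 < m₁) (hm₂ : 0 < m₂) :
    thetaStar m₂ m₁ = π / 2 - thetaStar m₁ m₂ := by
  rw [thetaStar, thetaStar, ← inv_div, sqrt_inv]
  exact arctan_inv_of_pos (sqrt_pos.2 (by positivity))

lemma mconst_comm (g m₁ m₂ : ℕ) : mconst g m₂ m₁ = mconst g m₁ m₂ := by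
  unfold mconst; ring

lemma lfun_pi_div_two_sub (m₁ m₂ : ℕ) (x : ℝ) : lfun m₂ m₁ (π / 2 - x) = -lfun m₁ m₂ x := by
  rw [lfun, lfun, cos_pi_div_two_sub, sin_pi_div_two_sub]
  ring

lemma sin_two_mul_pi_div_two_sub (x : ℝ) : sin (2 * (π / 2 - x)) = sin (2 * x) := by
  rw [show 2 * (π / 2 - x) = π - 2 * x by ring, sin_pi_sub]

lemma IsSolution.reflect {g m₁ m₂ : ℕ} {ξ θ α : ℝ → ℝ} (hsol : IsSolution g m₁ m₂ ξ θ α) :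
    IsSolution g m₂ m₁ ξ (fun t => π / 2 - θ t) (fun t => -α t) := by
  intro t
  obtain ⟨hξ, hθ, hα⟩ := hsol t
  have h2 := sin_two_mul_pi_div_two_sub (θ t)
  refine ⟨?_, ?_, ?_⟩
  · simpa only [cos_neg, h2] using hξ
  · exact (hθ.const_sub (π / 2)).congr_deriv (by rw [sin_neg, h2]; ring)
  · exact hα.neg.congr_deriv (by rw [sin_neg, cos_neg, h2, lfun_pi_div_two_sub, mconst_comm]; ring)

lemma mconst_pos (g m₁ : ℕ) {m₂ : ℕ} (hm₂ : 0 < m₂) : 0 < mconst g m₁ m₂ := by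
  unfold mconst
  have : (0 : ℝ) < m₂ := by exact_mod_cast hm₂
  positivity

lemma forall_lt_of_forall_ne {f : ℝ → ℝ} (hf : Continuous f) {t₀ v : ℝ} (hlt : f t₀ < v)
    (hne : ∀ T > 0, f (t₀ + T) ≠ v) {t : ℝ} (ht : t₀ ≤ t) : f t < v := by
  by_contra! hge
  obtain ⟨s, hs, hfs⟩ := intermediate_value_Icc ht hf.continuousOn ⟨hlt.le, hge⟩
  have hs₀ : t₀ < s := lt_of_le_of_ne hs.1 (by rintro rfl; linarith)
  exact hne (s - t₀) (by linarith) (by rwa [add_sub_cancel])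

lemma exists_pos_le_sin_two_mul {θ : ℝ → ℝ} {t₀ b : ℝ} (h₀ : 0 < θ t₀)
    (hmono : MonotoneOn θ (Ici t₀)) (hb : b < π / 2) (hbelow : ∀ t, t₀ ≤ t → θ t < b) :
    ∃ c > 0, ∀ t, t₀ ≤ t → c ≤ sin (2 * θ t) := by
  have hb₀ : θ t₀ < b := hbelow t₀ le_rfl
  refine ⟨min (sin (2 * θ t₀)) (sin (2 * b)), lt_min (sin_two_mul_pos ⟨h₀, hb₀.trans hb⟩)
    (sin_two_mul_pos ⟨h₀.trans hb₀, hb⟩), fun t ht => ?_⟩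
  have hθt : θ t₀ ≤ θ t := hmono self_mem_Ici ht ht
  exact strictConcaveOn_sin_Icc.concaveOn.min_le_of_mem_Icc
    ⟨by linarith, by linarith⟩ ⟨by linarith, by linarith⟩
    ⟨by linarith, by linarith [hbelow t ht]⟩

lemma neg_mul_le_sin_mul {a S E l m c M : ℝ} (ha : 0 < sin a) (hc : 0 < c) (hS : c ≤ S)
    (hE : 0 ≤ E) (hl : 0 ≤ l) (hlM : l ≤ M) (hm : 0 ≤ m) :
    -((m + 2 * M / c) * (sin a * S)) ≤ sin a * (sin a * S * (E - m) + 2 * cos a * l) := by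
  have hS₀ : 0 < S := hc.trans_le hS
  have hs1 := sin_le_one a
  have hco := neg_one_le_cos a
  have hexp : -(m * (sin a * S)) ≤ sin a * (sin a * S * (E - m)) := by
    nlinarith [mul_nonneg (mul_nonneg (mul_nonneg ha.le hS₀.le) hm) (sub_nonneg.2 hs1),
      mul_nonneg (mul_nonneg (mul_nonneg ha.le ha.le) hS₀.le) hE]
  have hcos : -(2 * M * sin a) ≤ sin a * (2 * cos a * l) := by
    nlinarith [mul_nonneg (mul_nonneg ha.le hl) (by linarith : 0 ≤ cos a + 1)]
  have hM : 2 * M * sin a ≤ 2 * M / c * (sin a * S) := by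
    rw [div_mul_eq_mul_div, le_div_iff₀ hc]
    nlinarith [mul_le_mul_of_nonneg_left hS (by nlinarith : 0 ≤ 2 * M * sin a)]
  nlinarith

lemma sq_eq_one_of_tendsto_sin_cos {α : ℝ → ℝ} {C : ℝ}
    (hsin : Tendsto (fun t => sin (α t)) atTop (𝓝 0))
    (hcos : Tendsto (fun t => cos (α t)) atTop (𝓝 C)) : C = 1 ∨ C = -1 := by
  have h : Tendsto (fun t => cos (α t) ^ 2) atTop (𝓝 (1 - 0 ^ 2)) :=
    ((hsin.pow 2).const_sub 1).congr fun t => by rw [← cos_sq']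
  have := tendsto_nhds_unique (hcos.pow 2) h
  rw [zero_pow two_ne_zero, sub_zero, ← one_pow 2] at this
  exact sq_eq_sq_iff_eq_or_eq_neg.1 this

section
variable {g m₁ m₂ : ℕ} {ξ θ α : ℝ → ℝ} {t₀ : ℝ}

lemma IsSolution.sin_alpha_pos (hsol : IsSolution g m₁ m₂ ξ θ α) (hm₂ : 0 < m₂)
    (hD : ∀ t, θ t ∈ Ioo 0 (π / 2)) (hbelow : ∀ t, t₀ ≤ t → θ t < thetaStar m₁ m₂)
    (h₀ : 0 < sin (α t₀)) {t : ℝ} (ht : t₀ ≤ t) : 0 < sin (α t) := by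
  have hd := fun x => (hsol x).2.2.sin
  refine pos_of_deriv_pos_of_eq_zero (f := fun s => sin (α s))
    (continuous_iff_continuousAt.2 fun x => (hd x).continuousAt) h₀ ht fun x hx hzero => ?_
  have hcos : cos (α x) ^ 2 = 1 := by nlinarith [sin_sq_add_cos_sq (α x)]
  have hl := lfun_pos hm₂ (hD x).1.le (hbelow x hx.1.le)
  rw [(hd x).deriv, hzero]
  linear_combination 2 * hl - 2 * lfun m₁ m₂ (θ x) * hcos

lemma IsSolution.monotoneOn_theta (hsol : IsSolution g m₁ m₂ ξ θ α)
    (hD : ∀ t, θ t ∈ Ioo 0 (π / 2)) (hsin : ∀ t, t₀ ≤ t → 0 < sin (α t)) :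
    MonotoneOn θ (Ici t₀) :=
  monotoneOn_Ici_of_hasDerivAt_nonneg (fun t => (hsol t).2.1) fun t ht =>
    (mul_pos (hsin t ht) (sin_two_mul_pos (hD t))).le

lemma IsSolution.exists_tendsto_cos_alpha (hsol : IsSolution g m₁ m₂ ξ θ α) (hm₂ : 0 < m₂)
    (hD : ∀ t, θ t ∈ Ioo 0 (π / 2)) (hbelow : ∀ t, t₀ ≤ t → θ t < thetaStar m₁ m₂)
    (hsin : ∀ t, t₀ ≤ t → 0 < sin (α t)) {c : ℝ} (hc : 0 < c)
    (hcS : ∀ t, t₀ ≤ t → c ≤ sin (2 * θ t)) :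
    ∃ C, Tendsto (fun t => cos (α t)) atTop (𝓝 C) := by
  set K := mconst g m₁ m₂ + 2 * m₁ / c
  have hK : 0 ≤ K := add_nonneg (mconst_pos g m₁ hm₂).le (by positivity)
  have hF : MonotoneOn (fun t => K * θ t - cos (α t)) (Ici t₀) :=
    monotoneOn_Ici_of_hasDerivAt_nonneg (fun t => ((hsol t).2.1.const_mul K).sub (hsol t).2.2.cos)
      fun t ht => by
        have := neg_mul_le_sin_mul (hsin t ht) hc (hcS t ht) (exp_pos (4 / g * ξ t)).le
          (lfun_pos hm₂ (hD t).1.le (hbelow t ht)).le (lfun_le m₁ m₂ _) (mconst_pos g m₁ hm₂).le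
        linarith
  obtain ⟨L, hL⟩ := exists_tendsto_of_monotoneOn_Ici hF (M := K * (π / 2) + 1) fun t _ => by
    nlinarith [(hD t).2, neg_one_le_cos (α t)]
  obtain ⟨Θ, hΘ⟩ := exists_tendsto_of_monotoneOn_Ici (hsol.monotoneOn_theta hD hsin)
    (M := π / 2) fun t _ => (hD t).2.le
  exact ⟨K * Θ - L, ((hΘ.const_mul K).sub hL).congr fun t => by ring⟩

lemma IsSolution.tendsto_sin_alpha_zero (hsol : IsSolution g m₁ m₂ ξ θ α)
    (hD : ∀ t, θ t ∈ Ioo 0 (π / 2)) (hsin : ∀ t, t₀ ≤ t → 0 < sin (α t)) {c : ℝ} (hc : 0 < c)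
    (hcS : ∀ t, t₀ ≤ t → c ≤ sin (2 * θ t)) {C : ℝ}
    (hC : Tendsto (fun t => cos (α t)) atTop (𝓝 C)) :
    Tendsto (fun t => sin (α t)) atTop (𝓝 0) := by
  have hlim : Tendsto (fun t => sin (α t)) atTop (𝓝 √(1 - C ^ 2)) := by
    refine (((continuous_const.sub (continuous_pow 2)).sqrt.tendsto C).comp hC).congr' ?_
    filter_upwards [eventually_ge_atTop t₀] with t ht
    show √(1 - cos (α t) ^ 2) = _
    rw [← sin_sq, sqrt_sq (hsin t ht).le]
  rcases (sqrt_nonneg (1 - C ^ 2)).eq_or_lt with h | h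
  · rwa [← h] at hlim
  have hθ : Tendsto θ atTop atTop := by
    refine tendsto_atTop_of_eventually_le_deriv (fun t => (hsol t).2.1)
      (mul_pos (half_pos h) hc) ?_
    filter_upwards [eventually_ge_atTop t₀, hlim.eventually (eventually_ge_nhds (half_lt_self h))]
      with t ht hst
    exact mul_le_mul hst (hcS t ht) hc.le (hsin t ht).le
  obtain ⟨t, ht⟩ := (hθ.eventually_ge_atTop (π / 2)).exists
  exact absurd ht (hD t).2.not_ge

lemma IsSolution.eventually_cos_mul_exp_sub_nonneg (hsol : IsSolution g m₁ m₂ ξ θ α)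
    (hg : 0 < g) (hm₂ : 0 < m₂) {c : ℝ} (hc : 0 < c) (hcS : ∀ t, t₀ ≤ t → c ≤ sin (2 * θ t))
    {C : ℝ} (hC : Tendsto (fun t => cos (α t)) atTop (𝓝 C)) (hC₁ : C = 1 ∨ C = -1) :
    ∀ᶠ t in atTop, 0 ≤ cos (α t) * (exp (4 / g * ξ t) - mconst g m₁ m₂) := by
  have hg' : (0 : ℝ) < 4 / g := by positivity
  rcases hC₁ with rfl | rfl
  · have hcos := hC.eventually (eventually_gt_nhds (by norm_num : (1 : ℝ) / 2 < 1))
    have hξ : Tendsto ξ atTop atTop := by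
      refine tendsto_atTop_of_eventually_le_deriv (fun t => (hsol t).1) (half_pos hc) ?_
      filter_upwards [eventually_ge_atTop t₀, hcos] with t ht hct
      nlinarith [hcS t ht]
    have hE := (tendsto_exp_atTop.comp (hξ.const_mul_atTop hg')).eventually_ge_atTop
      (mconst g m₁ m₂)
    filter_upwards [hcos, hE] with t hct hEt
    exact mul_nonneg (by linarith) (sub_nonneg.2 hEt)
  · have hcos := hC.eventually (eventually_lt_nhds (by norm_num : (-1 : ℝ) < -1 / 2))
    have hξ : Tendsto (fun t => -ξ t) atTop atTop := by
      refine tendsto_atTop_of_eventually_le_deriv (fun t => (hsol t).1.neg) (half_pos hc) ?_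
      filter_upwards [eventually_ge_atTop t₀, hcos] with t ht hct
      nlinarith [hcS t ht]
    have hξ' := (tendsto_neg_atTop_iff.1 hξ).const_mul_atBot hg'
    have hE := (tendsto_exp_atBot.comp hξ').eventually (eventually_le_nhds (mconst_pos g m₁ hm₂))
    filter_upwards [hcos, hE] with t hct hEt
    exact mul_nonneg_of_nonpos_of_nonpos (by linarith) (sub_nonpos.2 hEt)

theorem IsSolution.exists_thetaStar_of_lt (hsol : IsSolution g m₁ m₂ ξ θ α) (hg : 0 < g)
    (hm₂ : 0 < m₂) (hD : ∀ t, θ t ∈ Ioo 0 (π / 2)) (hlt : θ t₀ < thetaStar m₁ m₂)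
    (hθ' : 0 < sin (α t₀) * sin (2 * θ t₀)) :
    ∃ T > (0 : ℝ), θ (t₀ + T) = thetaStar m₁ m₂ := by
  by_contra! hnever
  have hbelow : ∀ t, t₀ ≤ t → θ t < thetaStar m₁ m₂ := fun t =>
    forall_lt_of_forall_ne (continuous_iff_continuousAt.2 fun t => (hsol t).2.1.continuousAt) hlt
      hnever
  have hsin : ∀ t, t₀ ≤ t → 0 < sin (α t) := fun t =>
    hsol.sin_alpha_pos hm₂ hD hbelow (pos_of_mul_pos_left hθ' (sin_two_mul_pos (hD t₀)).le)
  obtain ⟨c, hc, hcS⟩ := exists_pos_le_sin_two_mul (hD t₀).1 (hsol.monotoneOn_theta hD hsin)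
    (thetaStar_lt_pi_div_two m₁ m₂) hbelow
  obtain ⟨C, hC⟩ := hsol.exists_tendsto_cos_alpha hm₂ hD hbelow hsin hc hcS
  have hsin₀ := hsol.tendsto_sin_alpha_zero hD hsin hc hcS hC
  have hE := hsol.eventually_cos_mul_exp_sub_nonneg hg hm₂ hc hcS hC
    (sq_eq_one_of_tendsto_sin_cos hsin₀ hC)
  have hderiv := eventually_le_of_tendsto_of_eventually_deriv_nonneg
    (fun t => (hsol t).2.2.sin) ?_ hsin₀
  · obtain ⟨t, ht, hle⟩ := ((eventually_ge_atTop t₀).and hderiv).exists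
    exact (hsin t ht).not_ge hle
  filter_upwards [eventually_ge_atTop t₀, hE] with t ht hEt
  have hl := (lfun_pos hm₂ (hD t).1.le (hbelow t ht)).le
  have hS := sin_two_mul_pos (hD t)
  nlinarith [mul_nonneg (mul_nonneg (hsin t ht).le hS.le) hEt,
    mul_nonneg (sq_nonneg (cos (α t))) hl]

end

/-- If `θ'` points towards the line `θ = θ*`, then the solution reaches this
line in finite time. -/
theorem stmt8 (g m₁ m₂ : ℕ) (hg : g = 1 ∨ g = 2 ∨ g = 3 ∨ g = 4 ∨ g = 6)
    (hm₁ : 0 < m₁) (hm₂ : 0 < m₂)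
    (ξ θ α : ℝ → ℝ) (hsol : IsSolution g m₁ m₂ ξ θ α)
    (hD : ∀ t : ℝ, θ t ∈ Set.Ioo 0 (Real.pi / 2)) (t₀ : ℝ)
    (h : (θ t₀ < thetaStar m₁ m₂ ∧
            Real.sin (α t₀) * Real.sin (2 * θ t₀) > 0) ∨
         (θ t₀ > thetaStar m₁ m₂ ∧
            Real.sin (α t₀) * Real.sin (2 * θ t₀) < 0)) :
    ∃ T > (0 : ℝ), θ (t₀ + T) = thetaStar m₁ m₂ := by
  have hg₀ : 0 < g := by rcases hg with rfl | rfl | rfl | rfl | rfl <;> norm_num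
  rcases h with ⟨hlt, hθ'⟩ | ⟨hgt, hθ'⟩
  · exact hsol.exists_thetaStar_of_lt hg₀ hm₂ hD hlt hθ'
  have hD' (t : ℝ) : π / 2 - θ t ∈ Ioo 0 (π / 2) := ⟨by linarith [(hD t).2], by linarith [(hD t).1]⟩
  obtain ⟨T, hT, hθT⟩ := hsol.reflect.exists_thetaStar_of_lt (t₀ := t₀) hg₀ hm₁ hD'
    (by rw [thetaStar_swap hm₁ hm₂]; linarith)
    (by rw [sin_neg, sin_two_mul_pi_div_two_sub, neg_mul]; exact neg_pos.2 hθ')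
  rw [thetaStar_swap hm₁ hm₂] at hθT
  exact ⟨T, hT, by linarith⟩
end

section
/- Let ε > 0 and suppose ξ₀ = (g/4)·ln(m) + ε is of type 1. Then there exist times 0 < T₁ < T₂ such that the solution (ξ_{ξ₀}, θ_{ξ₀}, α_{ξ₀}) of (*) with initial condition (ξ₀, θ*, π/2) satisfies θ'_{ξ₀}(T₂) = 0 and ξ'_{ξ₀}(T₁)/θ'_{ξ₀}(T₁) = −1, while ξ'_{ξ₀}(t) < 0 and θ'_{ξ₀}(t) > 0 for all t ∈ (0, T₂). -/
/-- `Ξ Θ A` is the family of solutions of (*) indexed by the initial value `ξ₀`,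
with initial condition `(ξ, θ, α)(0) = (ξ₀, θ*, π/2)`. -/
def IsShootingFamily (g m₁ m₂ : ℕ) (Ξ Θ A : ℝ → ℝ → ℝ) : Prop :=
  ∀ ξ₀ : ℝ, IsSolution g m₁ m₂ (Ξ ξ₀) (Θ ξ₀) (A ξ₀) ∧
    Ξ ξ₀ 0 = ξ₀ ∧ Θ ξ₀ 0 = thetaStar m₁ m₂ ∧ A ξ₀ 0 = Real.pi / 2

/-- `ξ₀` is of type 1: there is `T > 0` with `θ_{ξ₀}(T) = θ*` and
`ξ'_{ξ₀}(t) ≠ 0` for all `t ∈ (0, T)`. -/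
def Type1 (m₁ m₂ : ℕ) (Ξ Θ A : ℝ → ℝ → ℝ) (ξ₀ : ℝ) : Prop :=
  ∃ T > (0 : ℝ), Θ ξ₀ T = thetaStar m₁ m₂ ∧
    ∀ t ∈ Set.Ioo (0 : ℝ) T, Real.cos (A ξ₀ t) * Real.sin (2 * Θ ξ₀ t) ≠ 0

/-- Lemma 4.7: if `ξ₀ = (g/4) ln m + ε` is of type 1, then there are times
`0 < T₁ < T₂` with `θ'(T₂) = 0` and `ξ'(T₁)/θ'(T₁) = -1`, while `ξ' < 0` and
`θ' > 0` on `(0, T₂)`. -/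
theorem stmt18 (g m₁ m₂ : ℕ) (hg : g = 1 ∨ g = 2 ∨ g = 3 ∨ g = 4 ∨ g = 6)
    (hm₁ : 0 < m₁) (hm₂ : 0 < m₂)
    (Ξ Θ A : ℝ → ℝ → ℝ) (hfam : IsShootingFamily g m₁ m₂ Ξ Θ A)
    (ε : ℝ) (hε : 0 < ε) (ξ₀ : ℝ)
    (hξ₀ : ξ₀ = (g : ℝ) / 4 * Real.log (mconst g m₁ m₂) + ε)
    (htype1 : Type1 m₁ m₂ Ξ Θ A ξ₀) :
    ∃ T₁ T₂ : ℝ, 0 < T₁ ∧ T₁ < T₂ ∧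
      Real.sin (A ξ₀ T₂) * Real.sin (2 * Θ ξ₀ T₂) = 0 ∧
      (Real.cos (A ξ₀ T₁) * Real.sin (2 * Θ ξ₀ T₁)) /
          (Real.sin (A ξ₀ T₁) * Real.sin (2 * Θ ξ₀ T₁)) = -1 ∧
      ∀ t ∈ Set.Ioo (0 : ℝ) T₂,
        Real.cos (A ξ₀ t) * Real.sin (2 * Θ ξ₀ t) < 0 ∧
        0 < Real.sin (A ξ₀ t) * Real.sin (2 * Θ ξ₀ t) := by
  classical
  obtain ⟨hsol, hx0, hθ0, ha0⟩ := hfam ξ₀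
  obtain ⟨T, hT, hθT, hp⟩ := htype1
  -- basic positivity facts
  have hgpos : (0:ℝ) < (g:ℝ) := by
    rcases hg with h|h|h|h|h <;> rw [h] <;> norm_num
  have hmpos : 0 < mconst g m₁ m₂ := by
    unfold mconst
    have h1 : (0:ℝ) < (m₁:ℝ) := by exact_mod_cast hm₁
    have h2 : (0:ℝ) ≤ (m₂:ℝ) := Nat.cast_nonneg _
    have h3 : (0:ℝ) < 2 / (g:ℝ) := by positivity
    linarith
  have hθs_pos : 0 < thetaStar m₁ m₂ := by
    have hx : (0:ℝ) < Real.sqrt ((m₁:ℝ)/(m₂:ℝ)) := by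
      apply Real.sqrt_pos.2
      apply div_pos <;> [exact_mod_cast hm₁; exact_mod_cast hm₂]
    calc (0:ℝ) = Real.arctan 0 := Real.arctan_zero.symm
      _ < _ := Real.arctan_strictMono hx
  have hθs_lt : thetaStar m₁ m₂ < Real.pi / 2 := Real.arctan_lt_pi_div_two _
  have hs : 0 < Real.sin (2 * thetaStar m₁ m₂) :=
    Real.sin_pos_of_pos_of_lt_pi (by linarith) (by linarith [Real.pi_pos])
  -- continuity
  have cA : Continuous (A ξ₀) :=
    continuous_iff_continuousAt.2 fun t => (hsol t).2.2.differentiableAt.continuousAt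
  have cΘ : Continuous (Θ ξ₀) :=
    continuous_iff_continuousAt.2 fun t => (hsol t).2.1.differentiableAt.continuousAt
  have ch : Continuous (fun t => Real.sin (2 * Θ ξ₀ t)) :=
    Real.continuous_sin.comp (continuous_const.mul cΘ)
  have csa : Continuous (fun t => Real.sin (A ξ₀ t)) := Real.continuous_sin.comp cA
  have cca : Continuous (fun t => Real.cos (A ξ₀ t)) := Real.continuous_cos.comp cA
  -- sin(2θ) > 0 on [0,T]
  have claim1 : ∀ t ∈ Set.Ioo (0:ℝ) T, Real.sin (2 * Θ ξ₀ t) ≠ 0 := by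
    intro t ht h0
    exact hp t ht (by rw [h0, mul_zero])
  have hpos2θ : ∀ t ∈ Set.Icc (0:ℝ) T, 0 < Real.sin (2 * Θ ξ₀ t) := by
    intro t ht
    by_contra hle
    push_neg at hle
    have ht0 : t ≠ 0 := by
      rintro rfl; rw [hθ0] at hle; linarith
    have htT : t ≠ T := by
      rintro rfl; rw [hθT] at hle; linarith
    have htIoo : t ∈ Set.Ioo (0:ℝ) T :=
      ⟨lt_of_le_of_ne ht.1 (Ne.symm ht0), lt_of_le_of_ne ht.2 htT⟩
    have hlt : Real.sin (2 * Θ ξ₀ t) < 0 := lt_of_le_of_ne hle (claim1 t htIoo)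
    have h0mem : (0:ℝ) ∈ Set.Ioo (Real.sin (2 * Θ ξ₀ t)) (Real.sin (2 * Θ ξ₀ 0)) :=
      ⟨hlt, by rw [hθ0]; exact hs⟩
    obtain ⟨u, hu, hu0⟩ := intermediate_value_Ioo' htIoo.1.le ch.continuousOn h0mem
    exact claim1 u ⟨hu.1, hu.2.trans htIoo.2⟩ hu0
  -- the derivative of α at 0 is positive
  have hexp : mconst g m₁ m₂ < Real.exp (4 / (g:ℝ) * ξ₀) := by
    have h1 : 4 / (g:ℝ) * ξ₀ = Real.log (mconst g m₁ m₂) + 4 / (g:ℝ) * ε := by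
      rw [hξ₀]; field_simp
    have h2 : 0 < 4 / (g:ℝ) * ε := by positivity
    calc mconst g m₁ m₂ = Real.exp (Real.log (mconst g m₁ m₂)) := (Real.exp_log hmpos).symm
      _ < Real.exp (4 / (g:ℝ) * ξ₀) := by
          rw [h1]; exact Real.exp_lt_exp.2 (by linarith)
  have hA0 : HasDerivAt (A ξ₀)
      (Real.sin (2 * thetaStar m₁ m₂) * (Real.exp (4 / (g:ℝ) * ξ₀) - mconst g m₁ m₂)) 0 := by
    have h := (hsol 0).2.2
    rw [hx0, hθ0, ha0] at h
    simpa [Real.sin_pi_div_two, Real.cos_pi_div_two] using h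
  have hdpos : 0 < Real.sin (2 * thetaStar m₁ m₂) * (Real.exp (4 / (g:ℝ) * ξ₀) - mconst g m₁ m₂) :=
    mul_pos hs (sub_pos.2 hexp)
  -- find t₁ ∈ (0,T) with π/2 < A t₁ < π + π/2
  have hslope := hasDerivAt_iff_tendsto_slope.1 hA0
  have ev1 : ∀ᶠ t in nhdsWithin (0:ℝ) (Set.Ioi 0), 0 < slope (A ξ₀) 0 t :=
    (hslope.eventually (eventually_gt_nhds hdpos)).filter_mono
      (nhdsWithin_mono 0 fun x hx => Set.mem_compl_singleton_iff.2 (ne_of_gt hx))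
  have ev2 : ∀ᶠ t in nhdsWithin (0:ℝ) (Set.Ioi 0), A ξ₀ t < Real.pi + Real.pi / 2 := by
    have htend : Filter.Tendsto (A ξ₀) (nhds 0) (nhds (Real.pi / 2)) := by
      rw [← ha0]; exact cA.continuousAt
    exact (htend.eventually (eventually_lt_nhds (by linarith [Real.pi_pos]))).filter_mono
      nhdsWithin_le_nhds
  have ev3 : ∀ᶠ t in nhdsWithin (0:ℝ) (Set.Ioi 0), t ∈ Set.Ioo (0:ℝ) T :=
    Ioo_mem_nhdsGT_of_mem ⟨le_refl 0, hT⟩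
  obtain ⟨t₁, h1, h2, h3⟩ := (ev1.and (ev2.and ev3)).exists
  obtain ⟨ht₁pos, ht₁T⟩ := h3
  have ht₁gt : Real.pi / 2 < A ξ₀ t₁ := by
    have hsl : 0 < (A ξ₀ t₁ - A ξ₀ 0) / (t₁ - 0) := by
      rw [← slope_def_field]; exact h1
    have hnum : 0 < A ξ₀ t₁ - A ξ₀ 0 := by
      by_contra hle
      push_neg at hle
      have := div_nonpos_of_nonpos_of_nonneg hle (by linarith : (0:ℝ) ≤ t₁ - 0)
      linarith
    rw [ha0] at hnum; linarith
  have hcos_t₁ : Real.cos (A ξ₀ t₁) < 0 := Real.cos_neg_of_pi_div_two_lt_of_lt ht₁gt h2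
  -- cos(α) < 0 on (0,T)
  have hcosneg : ∀ t ∈ Set.Ioo (0:ℝ) T, Real.cos (A ξ₀ t) < 0 := by
    intro t ht
    by_contra hle
    push_neg at hle
    have hne : Real.cos (A ξ₀ t) ≠ 0 := fun h0 => hp t ht (by rw [h0, zero_mul])
    have hgt : 0 < Real.cos (A ξ₀ t) := lt_of_le_of_ne hle (Ne.symm hne)
    rcases lt_trichotomy t t₁ with hlt | heq | hgt'
    · obtain ⟨u, hu, hu0⟩ := intermediate_value_Ioo' hlt.le cca.continuousOn
        (⟨hcos_t₁, hgt⟩ : (0:ℝ) ∈ Set.Ioo (Real.cos (A ξ₀ t₁)) (Real.cos (A ξ₀ t)))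
      exact hp u ⟨ht.1.trans hu.1, hu.2.trans ht₁T⟩ (by rw [show Real.cos (A ξ₀ u) = 0 from hu0, zero_mul])
    · rw [heq] at hgt; linarith
    · obtain ⟨u, hu, hu0⟩ := intermediate_value_Ioo hgt'.le cca.continuousOn
        (⟨hcos_t₁, hgt⟩ : (0:ℝ) ∈ Set.Ioo (Real.cos (A ξ₀ t₁)) (Real.cos (A ξ₀ t)))
      exact hp u ⟨ht₁pos.trans hu.1, hu.2.trans ht.2⟩ (by rw [show Real.cos (A ξ₀ u) = 0 from hu0, zero_mul])
  -- Rolle: θ' has a zero in (0,T), hence sin(α) vanishes there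
  obtain ⟨c, hc, hc0⟩ := exists_hasDerivAt_eq_zero hT cΘ.continuousOn
    (by rw [hθ0, hθT]) (fun x _ => (hsol x).2.1)
  have hsinc : Real.sin (A ξ₀ c) = 0 :=
    (mul_eq_zero.1 hc0).resolve_right (ne_of_gt (hpos2θ c ⟨hc.1.le, hc.2.le⟩))
  -- T₂ := first zero of sin(α) in [0,T]
  set Z : Set ℝ := Set.Icc 0 T ∩ {t | Real.sin (A ξ₀ t) = 0} with hZdef
  have hZclosed : IsClosed Z := isClosed_Icc.inter (isClosed_eq csa continuous_const)
  have hZne : Z.Nonempty := ⟨c, ⟨hc.1.le, hc.2.le⟩, hsinc⟩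
  have hZbdd : BddBelow Z := ⟨0, fun t ht => ht.1.1⟩
  set T₂ := sInf Z with hT₂def
  have hT₂Z : T₂ ∈ Z := hZclosed.csInf_mem hZne hZbdd
  have hsinT₂ : Real.sin (A ξ₀ T₂) = 0 := hT₂Z.2
  have hT₂pos : 0 < T₂ := by
    rcases lt_or_eq_of_le hT₂Z.1.1 with h | h
    · exact h
    · exfalso
      rw [← h, ha0, Real.sin_pi_div_two] at hsinT₂
      linarith
  have hT₂ltT : T₂ < T := lt_of_le_of_lt (csInf_le hZbdd ⟨⟨hc.1.le, hc.2.le⟩, hsinc⟩) hc.2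
  -- sin(α) > 0 on [0, T₂)
  have hsinpos : ∀ t ∈ Set.Ico (0:ℝ) T₂, 0 < Real.sin (A ξ₀ t) := by
    intro t ht
    by_contra hle
    push_neg at hle
    have hne : Real.sin (A ξ₀ t) ≠ 0 := by
      intro h0
      have : t ∈ Z := ⟨⟨ht.1, (ht.2.trans hT₂ltT).le⟩, h0⟩
      exact absurd (csInf_le hZbdd this) (not_le.2 ht.2)
    have hlt : Real.sin (A ξ₀ t) < 0 := lt_of_le_of_ne hle hne
    have ht0 : 0 < t := by
      rcases lt_or_eq_of_le ht.1 with h | h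
      · exact h
      · exfalso; rw [← h, ha0, Real.sin_pi_div_two] at hlt; linarith
    have h0mem : (0:ℝ) ∈ Set.Ioo (Real.sin (A ξ₀ t)) (Real.sin (A ξ₀ 0)) :=
      ⟨hlt, by rw [ha0, Real.sin_pi_div_two]; norm_num⟩
    obtain ⟨u, hu, hu0⟩ := intermediate_value_Ioo' ht0.le csa.continuousOn h0mem
    have huZ : u ∈ Z := ⟨⟨hu.1.le, ((hu.2.trans ht.2).trans hT₂ltT).le⟩, hu0⟩
    exact absurd (csInf_le hZbdd huZ) (not_le.2 (hu.2.trans ht.2))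
  -- find T₁ via IVT on F = cos α + sin α
  have hF0 : (0:ℝ) < Real.cos (A ξ₀ 0) + Real.sin (A ξ₀ 0) := by
    rw [ha0, Real.sin_pi_div_two, Real.cos_pi_div_two]; norm_num
  have hFT₂ : Real.cos (A ξ₀ T₂) + Real.sin (A ξ₀ T₂) < 0 := by
    rw [hsinT₂, add_zero]
    exact hcosneg T₂ ⟨hT₂pos, hT₂ltT⟩
  obtain ⟨T₁, hT₁mem, hFT₁⟩ := intermediate_value_Ioo' hT₂pos.le (cca.add csa).continuousOn
    (⟨hFT₂, hF0⟩ : (0:ℝ) ∈ Set.Ioo (Real.cos (A ξ₀ T₂) + Real.sin (A ξ₀ T₂))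
      (Real.cos (A ξ₀ 0) + Real.sin (A ξ₀ 0)))
  have hFT₁' : Real.cos (A ξ₀ T₁) + Real.sin (A ξ₀ T₁) = 0 := hFT₁
  -- assemble
  refine ⟨T₁, T₂, hT₁mem.1, hT₁mem.2, ?_, ?_, ?_⟩
  · rw [hsinT₂, zero_mul]
  · have hsT₁ : 0 < Real.sin (A ξ₀ T₁) := hsinpos T₁ ⟨hT₁mem.1.le, hT₁mem.2⟩
    have hhT₁ : 0 < Real.sin (2 * Θ ξ₀ T₁) :=
      hpos2θ T₁ ⟨hT₁mem.1.le, (hT₁mem.2.trans hT₂ltT).le⟩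
    have hcosT₁ : Real.cos (A ξ₀ T₁) * Real.sin (2 * Θ ξ₀ T₁)
        = -(Real.sin (A ξ₀ T₁) * Real.sin (2 * Θ ξ₀ T₁)) := by
      have : Real.cos (A ξ₀ T₁) = -Real.sin (A ξ₀ T₁) := by linarith
      rw [this]; ring
    rw [hcosT₁]
    exact neg_div_self (by positivity)
  · intro t ht
    have htT : t ∈ Set.Ioo (0:ℝ) T := ⟨ht.1, ht.2.trans hT₂ltT⟩
    have h2 : 0 < Real.sin (2 * Θ ξ₀ t) := hpos2θ t ⟨ht.1.le, htT.2.le⟩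
    exact ⟨mul_neg_of_neg_of_pos (hcosneg t htT) h2,
      mul_pos (hsinpos t ⟨ht.1.le, ht.2⟩) h2⟩
end
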